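/- arXiv:1510.00804 — 3 statements merged into one kernel-verified Lean document; each statement's English description precedes it below -/
import Mathlib

section
/- If m : ℝ≥0 → ℝ≥0 is continuous and t ↦ m(t)/t is decreasing on (0,∞), then for all t ≥ 0, (1/2)·M(t) - (1/4)·m(t)·t ≥ 0, where M(t) = ∫₀ᵗ m(s) ds. -/
open MeasureTheory Set

theorem stmt_0 (m : ℝ → ℝ) (hmc : Continuous m) (hmnn : ∀ t, 0 ≤ m t)
    (hdec : AntitoneOn (fun t => m t / t) (Set.Ioi (0 : ℝ))) :
    ∀ t ≥ (0 : ℝ),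
      (1 / 2) * (∫ s in (0 : ℝ)..t, m s) - (1 / 4) * (m t * t) ≥ 0 := by
  intro t ht
  rcases eq_or_lt_of_le ht with h0 | h0
  · simp [← h0]
  -- pointwise bound: for s ∈ [0, t], m t / t * s ≤ m s
  have key : ∀ s ∈ Set.Icc (0:ℝ) t, m t / t * s ≤ m s := by
    intro s hs
    rcases eq_or_lt_of_le hs.1 with h1 | h1
    · simpa [← h1] using hmnn 0
    · have := hdec (Set.mem_Ioi.2 h1) (Set.mem_Ioi.2 h0) hs.2
      calc m t / t * s ≤ m s / s * s := by
            apply mul_le_mul_of_nonneg_right this (le_of_lt h1)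
        _ = m s := by field_simp
  have hint : (∫ s in (0:ℝ)..t, m t / t * s) ≤ ∫ s in (0:ℝ)..t, m s := by
    apply intervalIntegral.integral_mono_on (le_of_lt h0)
    · exact (continuous_const.mul continuous_id).intervalIntegrable 0 t
    · exact hmc.intervalIntegrable 0 t
    · exact key
  have hval : (∫ s in (0:ℝ)..t, m t / t * s) = m t * t / 2 := by
    rw [intervalIntegral.integral_const_mul, integral_id]
    field_simp
    ring
  rw [hval] at hint
  nlinarith [hint]
end

section
/- Let f : ℝ → ℝ be continuous with f(t) = 0 for t ≤ 0 and suppose t ↦ f(t)/t³ is increasing on (0,∞). Then the function s ↦ s·f(s) - 4·F(s) is monotone increasing on [0,∞), where F(s) = ∫₀ˢ f(τ) dτ. In particular s·f(s) - 4·F(s) ≥ 0 for all s ≥ 0. -/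
open MeasureTheory Set

/-!
Fix `0 ≤ a ≤ b` and put `c = f b / b ^ n`. Monotonicity of `f t / t ^ n` gives `f t ≤ c t ^ n` on
`(0, b]`, so `a f a ≤ c a ^ (n + 1)` and `(n + 1) ∫_a^b f ≤ c (b ^ (n + 1) - a ^ (n + 1))`, while
`b f b = c b ^ (n + 1)`. Hence `s f s - (n + 1) ∫_0^s f` increases from `a` to `b`.
-/

section PowerRatio

variable {f : ℝ → ℝ} {n : ℕ} {a b : ℝ}

lemma le_div_pow_mul_pow_of_monotoneOn (hmono : MonotoneOn (fun t => f t / t ^ n) (Ioi 0))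
    {t : ℝ} (ht : 0 < t) (htb : t ≤ b) : f t ≤ f b / b ^ n * t ^ n := by
  have hratio : f t / t ^ n ≤ f b / b ^ n := hmono ht (ht.trans_le htb) htb
  rwa [div_le_iff₀ (by positivity)] at hratio

lemma mul_intervalIntegral_le_of_monotoneOn_div_pow
    (hmono : MonotoneOn (fun t => f t / t ^ n) (Ioi 0)) (hf : IntervalIntegrable f volume a b)
    (ha : 0 ≤ a) (hab : a ≤ b) :
    (n + 1) * ∫ t in a..b, f t ≤ f b / b ^ n * (b ^ (n + 1) - a ^ (n + 1)) := by
  have hpow : IntervalIntegrable (fun t => f b / b ^ n * t ^ n) volume a b :=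
    (continuous_const.mul (continuous_pow n)).intervalIntegrable a b
  calc (n + 1) * ∫ t in a..b, f t ≤ (n + 1) * ∫ t in a..b, f b / b ^ n * t ^ n := by
        gcongr
        exact intervalIntegral.integral_mono_on_of_le_Ioo hab hf hpow fun t ht =>
          le_div_pow_mul_pow_of_monotoneOn hmono (ha.trans_lt ht.1) ht.2.le
    _ = f b / b ^ n * (b ^ (n + 1) - a ^ (n + 1)) := by
        rw [intervalIntegral.integral_const_mul, integral_pow]
        field_simp

theorem monotoneOn_mul_sub_intervalIntegral_of_monotoneOn_div_pow
    (hmono : MonotoneOn (fun t => f t / t ^ n) (Ioi 0))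
    (hf : ∀ a b, IntervalIntegrable f volume a b) :
    MonotoneOn (fun s => s * f s - (n + 1) * ∫ t in (0 : ℝ)..s, f t) (Ici 0) := by
  intro a ha b _ hab
  rcases hab.eq_or_lt with rfl | hlt
  · exact le_rfl
  have hb : 0 < b := (mem_Ici.mp ha).trans_lt hlt
  set c := f b / b ^ n
  have hbf : b * f b = c * b ^ (n + 1) := by
    simp only [c, pow_succ]
    field_simp
  have haf : a * f a ≤ c * a ^ (n + 1) := by
    rcases (mem_Ici.mp ha).eq_or_lt with rfl | ha'
    · simp
    · rw [pow_succ, ← mul_assoc, mul_comm a]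
      exact mul_le_mul_of_nonneg_right (le_div_pow_mul_pow_of_monotoneOn hmono ha' hab) ha'.le
  have hint := mul_intervalIntegral_le_of_monotoneOn_div_pow hmono (hf a b) ha hab
  have hsplit : ∫ t in (0 : ℝ)..b, f t = (∫ t in (0 : ℝ)..a, f t) + ∫ t in a..b, f t :=
    (intervalIntegral.integral_add_adjacent_intervals (hf 0 a) (hf a b)).symm
  simp only [hsplit]
  linear_combination hint + haf - hbf

end PowerRatio

theorem stmt_1_general (f : ℝ → ℝ) (hfc : Continuous f)
    (hmono : MonotoneOn (fun t => f t / t ^ 3) (Set.Ioi (0 : ℝ))) :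
    MonotoneOn (fun s => s * f s - 4 * ∫ τ in (0 : ℝ)..s, f τ) (Set.Ici (0 : ℝ)) ∧
      ∀ s ≥ (0 : ℝ), 0 ≤ s * f s - 4 * ∫ τ in (0 : ℝ)..s, f τ := by
  have key : MonotoneOn (fun s => s * f s - 4 * ∫ τ in (0 : ℝ)..s, f τ) (Ici 0) := by
    convert monotoneOn_mul_sub_intervalIntegral_of_monotoneOn_div_pow hmono
      hfc.intervalIntegrable using 4
    norm_num
  refine ⟨key, fun s hs => ?_⟩
  simpa using key (mem_Ici.mpr le_rfl) (mem_Ici.mpr hs) hs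

theorem stmt_1 (f : ℝ → ℝ) (hfc : Continuous f) (hf0 : ∀ t ≤ (0 : ℝ), f t = 0)
    (hfpos : ∀ t > (0 : ℝ), 0 < f t)
    (hmono : MonotoneOn (fun t => f t / t ^ 3) (Set.Ioi (0 : ℝ))) :
    MonotoneOn (fun s => s * f s - 4 * ∫ τ in (0 : ℝ)..s, f τ) (Set.Ici (0 : ℝ)) ∧
      ∀ s ≥ (0 : ℝ), 0 ≤ s * f s - 4 * ∫ τ in (0 : ℝ)..s, f τ :=
  stmt_1_general f hfc hmono
end

section
/- Let g : ℝ → ℝ satisfy lim_{t→∞} t·g(t)·e^{-t²} = ∞, and let (t_k) be a sequence with t_k² ≥ π for all k and t_k² bounded, and suppose t_k² ≥ (2/k)·t_k·c_k·g(t_k·c_k) where c_k² = (log k)/π + O(1) and c_k → ∞. Then one obtains a contradiction; more precisely, no bounded sequence (t_k) with t_k² ≥ π can satisfy the stated lower bound for all k. -/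
open Filter

theorem stmt_18 (g : ℝ → ℝ)
    (hg : Tendsto (fun t => t * g t * Real.exp (-t ^ 2)) atTop atTop)
    (t c : ℕ → ℝ) (htpos : ∀ k, 0 < t k) (htπ : ∀ k, Real.pi ≤ (t k) ^ 2)
    (htbd : ∃ B : ℝ, ∀ k, (t k) ^ 2 ≤ B)
    (hcO : ∃ D : ℝ, ∀ k : ℕ, 1 ≤ k → |(c k) ^ 2 - Real.log k / Real.pi| ≤ D)
    (hcinf : Tendsto c atTop atTop)
    (hineq : ∀ k : ℕ, 1 ≤ k →
      (2 / (k : ℝ)) * t k * c k * g (t k * c k) ≤ (t k) ^ 2) :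
    False := by
  obtain ⟨B, hB⟩ := htbd
  obtain ⟨D, hD⟩ := hcO
  set ω : ℝ → ℝ := fun s => s * g s * Real.exp (-s ^ 2) with hωdef
  set E : ℝ := Real.exp (Real.pi * D) with hEdef
  have hEpos : 0 < E := Real.exp_pos _
  -- t k ≥ √π
  have hsqrtπ : ∀ k, Real.sqrt Real.pi ≤ t k := by
    intro k
    have h := Real.sqrt_le_sqrt (htπ k)
    rwa [Real.sqrt_sq (htpos k).le] at h
  -- s k := t k * c k → ∞
  have hc0 : ∀ᶠ k in atTop, (0 : ℝ) ≤ c k := hcinf.eventually_ge_atTop 0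
  have hs : Tendsto (fun k => t k * c k) atTop atTop := by
    apply tendsto_atTop_mono' atTop (f₁ := fun k => Real.sqrt Real.pi * c k)
    · filter_upwards [hc0] with k hk
      exact mul_le_mul_of_nonneg_right (hsqrtπ k) hk
    · exact Tendsto.const_mul_atTop (Real.sqrt_pos.mpr Real.pi_pos) hcinf
  have hωs : Tendsto (fun k => ω (t k * c k)) atTop atTop := hg.comp hs
  obtain ⟨k, hωk, hk1⟩ :=
    ((hωs.eventually_gt_atTop (max 0 (B * E / 2))).and (eventually_ge_atTop 1)).exists
  have hkpos : (0 : ℝ) < (k : ℝ) := by exact_mod_cast hk1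
  have hωpos : 0 < ω (t k * c k) :=
    lt_of_le_of_lt (le_max_left _ _) hωk
  have hωgt : B * E / 2 < ω (t k * c k) :=
    lt_of_le_of_lt (le_max_right _ _) hωk
  -- key identity
  have hexpne : Real.exp (-(t k * c k) ^ 2) * Real.exp ((t k * c k) ^ 2) = 1 := by
    rw [← Real.exp_add]; simp
  have hid : t k * c k * g (t k * c k)
      = Real.exp ((t k * c k) ^ 2) * ω (t k * c k) := by
    simp only [hωdef]
    calc t k * c k * g (t k * c k)
        = t k * c k * g (t k * c k)
          * (Real.exp (-(t k * c k) ^ 2) * Real.exp ((t k * c k) ^ 2)) := by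
          rw [hexpne]; ring
      _ = Real.exp ((t k * c k) ^ 2)
          * (t k * c k * g (t k * c k) * Real.exp (-(t k * c k) ^ 2)) := by ring
  -- lower bound on exp(s²)
  have hlog : Real.log k / Real.pi * Real.pi = Real.log k :=
    div_mul_cancel₀ _ Real.pi_ne_zero
  have hck : Real.log k / Real.pi - D ≤ (c k) ^ 2 := by
    have h := abs_le.mp (hD k hk1)
    linarith [h.1]
  have hsq : Real.log k - Real.pi * D ≤ (t k * c k) ^ 2 := by
    have h2 : Real.pi * (c k) ^ 2 ≤ (t k) ^ 2 * (c k) ^ 2 :=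
      mul_le_mul_of_nonneg_right (htπ k) (sq_nonneg _)
    nlinarith [mul_le_mul_of_nonneg_left hck Real.pi_pos.le]
  have hexp : (k : ℝ) * E⁻¹ ≤ Real.exp ((t k * c k) ^ 2) := by
    calc (k : ℝ) * E⁻¹ = Real.exp (Real.log k - Real.pi * D) := by
          rw [Real.exp_sub, Real.exp_log hkpos, hEdef, div_eq_mul_inv]
      _ ≤ _ := Real.exp_le_exp.mpr hsq
  -- combine
  have h2 : 2 / (k : ℝ) * (Real.exp ((t k * c k) ^ 2) * ω (t k * c k)) ≤ B :=
    calc 2 / (k : ℝ) * (Real.exp ((t k * c k) ^ 2) * ω (t k * c k))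
        = 2 / (k : ℝ) * t k * c k * g (t k * c k) := by rw [← hid]; ring
      _ ≤ (t k) ^ 2 := hineq k hk1
      _ ≤ B := hB k
  have h3 : 2 * ((k : ℝ) * E⁻¹ * ω (t k * c k)) ≤ B * k := by
    have h4 : 2 * ((k : ℝ) * E⁻¹ * ω (t k * c k))
        ≤ 2 * (Real.exp ((t k * c k) ^ 2) * ω (t k * c k)) := by
      nlinarith [mul_le_mul_of_nonneg_right hexp hωpos.le]
    have h5 : 2 * (Real.exp ((t k * c k) ^ 2) * ω (t k * c k)) ≤ B * k := by
      rw [div_mul_eq_mul_div, div_le_iff₀ hkpos] at h2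
      linarith
    linarith
  have h6 : 2 * (E⁻¹ * ω (t k * c k)) ≤ B := by
    nlinarith [h3, hkpos]
  have hEinv : E⁻¹ * E = 1 := inv_mul_cancel₀ hEpos.ne'
  nlinarith [h6, hEpos, hωgt, hEinv, mul_le_mul_of_nonneg_right h6 hEpos.le]
end
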